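/- arXiv:2305.16440 — 2 statements merged into one kernel-verified Lean document; each statement's English description precedes it below -/
import Mathlib

section
/- Let A₁ and A₂ be real matrices with the same number of columns d, satisfying A₁ᵀA₁ ⪰ A₂ᵀA₂ in the Loewner (positive semidefinite) order. Then for all real matrices B₁ ∈ ℝ^{d×p} and B₂ ∈ ℝ^{d×q}, one has ‖P⊥_{A₁B₁} A₁ B₂‖_F² ≥ ‖P⊥_{A₂B₁} A₂ B₂‖_F². -/
/-!
Work column by column. For a column `b` of `B₂`, pick `c` with `A₁B₁c = P_{A₁B₁}A₁b` and put
`w = b - B₁c`. The projection onto the column space of `A₂B₁` is the nearest point of that space,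
so `‖P⊥_{A₂B₁}A₂b‖ ≤ ‖A₂b - A₂B₁c‖ = ‖A₂w‖`; the Loewner hypothesis gives `‖A₂w‖ ≤ ‖A₁w‖`; and
`A₁w = P⊥_{A₁B₁}A₁b` by the choice of `c`.
-/

open Matrix

/-- The orthogonal projection matrix onto the column space of `M`,
i.e. `P_M = M (Mᵀ M)† Mᵀ`, characterized as the matrix of the orthogonal
projection of Euclidean space onto the column space of `M`. -/
noncomputable def projMat {a b : ℕ} (M : Matrix (Fin a) (Fin b) ℝ) :
    Matrix (Fin a) (Fin a) ℝ :=
  Matrix.toEuclideanLin.symm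
    ((LinearMap.range (Matrix.toEuclideanLin M)).subtype ∘ₗ
      (Submodule.orthogonalProjectionOnto (LinearMap.range (Matrix.toEuclideanLin M))).toLinearMap)

/-- Squared Frobenius norm of a matrix. -/
def froSq {a b : ℕ} (M : Matrix (Fin a) (Fin b) ℝ) : ℝ := ∑ i, ∑ j, (M i j) ^ 2

theorem Submodule.norm_sub_starProjection_le {𝕜 E : Type*} [RCLike 𝕜] [NormedAddCommGroup E]
    [InnerProductSpace 𝕜 E] {U : Submodule 𝕜 E} [U.HasOrthogonalProjection] (y : E) {x : E}
    (hx : x ∈ U) : ‖y - U.starProjection y‖ ≤ ‖y - x‖ := by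
  rw [starProjection_minimal]
  exact ciInf_le ⟨0, Set.forall_mem_range.mpr fun _ => norm_nonneg _⟩ (⟨x, hx⟩ : U)

theorem toEuclideanLin_one_sub_projMat_apply {a b : ℕ} (M : Matrix (Fin a) (Fin b) ℝ)
    (v : EuclideanSpace ℝ (Fin a)) :
    toEuclideanLin (1 - projMat M) v =
      v - (LinearMap.range (toEuclideanLin M)).starProjection v := by
  simp [projMat, map_sub, toLpLin_one]

theorem norm_toEuclideanLin_sq {m n : Type*} [Fintype m] [Fintype n] [DecidableEq n]
    (A : Matrix m n ℝ) (w : EuclideanSpace ℝ n) :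
    ‖toEuclideanLin A w‖ ^ 2 = w.ofLp ⬝ᵥ (Aᵀ * A) *ᵥ w.ofLp := by
  rw [← real_inner_self_eq_norm_sq, EuclideanSpace.inner_eq_star_dotProduct, ← mulVec_mulVec,
    dotProduct_mulVec, vecMul_transpose]
  simp [ofLp_toLpLin]

theorem norm_toEuclideanLin_le_of_posSemidef {m₁ m₂ n : Type*} [Fintype m₁] [Fintype m₂]
    [Fintype n] [DecidableEq n] {A₁ : Matrix m₁ n ℝ} {A₂ : Matrix m₂ n ℝ}
    (hA : (A₁ᵀ * A₁ - A₂ᵀ * A₂).PosSemidef) (w : EuclideanSpace ℝ n) :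
    ‖toEuclideanLin A₂ w‖ ≤ ‖toEuclideanLin A₁ w‖ := by
  rw [← sq_le_sq₀ (norm_nonneg _) (norm_nonneg _), norm_toEuclideanLin_sq,
    norm_toEuclideanLin_sq, ← sub_nonneg, ← dotProduct_sub, ← sub_mulVec]
  simpa using hA.dotProduct_mulVec_nonneg w.ofLp

theorem norm_one_sub_projMat_mul_le {n₁ n₂ d p : ℕ}
    {A₁ : Matrix (Fin n₁) (Fin d) ℝ} {A₂ : Matrix (Fin n₂) (Fin d) ℝ}
    (hA : (A₁ᵀ * A₁ - A₂ᵀ * A₂).PosSemidef) (B₁ : Matrix (Fin d) (Fin p) ℝ)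
    (b : EuclideanSpace ℝ (Fin d)) :
    ‖toEuclideanLin (1 - projMat (A₂ * B₁)) (toEuclideanLin A₂ b)‖ ≤
      ‖toEuclideanLin (1 - projMat (A₁ * B₁)) (toEuclideanLin A₁ b)‖ := by
  simp only [toEuclideanLin_one_sub_projMat_apply]
  obtain ⟨c, hc⟩ := (LinearMap.range (toEuclideanLin (A₁ * B₁))).starProjection_apply_mem
    (toEuclideanLin A₁ b)
  have hmul : ∀ {n} (A : Matrix (Fin n) (Fin d) ℝ),
      toEuclideanLin A b - toEuclideanLin (A * B₁) c =
        toEuclideanLin A (b - toEuclideanLin B₁ c) := by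
    intro n A
    rw [map_sub, toLpLin_mul]
    rfl
  calc _ ≤ ‖toEuclideanLin A₂ b - toEuclideanLin (A₂ * B₁) c‖ :=
        Submodule.norm_sub_starProjection_le _ (LinearMap.mem_range_self _ c)
    _ ≤ ‖toEuclideanLin A₁ b - toEuclideanLin (A₁ * B₁) c‖ := by
        rw [hmul, hmul]
        exact norm_toEuclideanLin_le_of_posSemidef hA _
    _ = _ := by rw [hc]

theorem froSq_mul_mul_eq_sum_norm_sq {a b c e : ℕ} (X : Matrix (Fin a) (Fin b) ℝ)
    (A : Matrix (Fin b) (Fin c) ℝ) (Y : Matrix (Fin c) (Fin e) ℝ) :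
    froSq (X * (A * Y)) =
      ∑ j, ‖toEuclideanLin X (toEuclideanLin A (WithLp.toLp 2 (Yᵀ j)))‖ ^ 2 := by
  rw [froSq, Finset.sum_comm]
  refine Finset.sum_congr rfl fun j _ => ?_
  rw [EuclideanSpace.norm_sq_eq]
  simp only [ofLp_toLpLin, toLin'_apply, mulVec_mulVec, Real.norm_eq_abs, sq_abs,
    ← Matrix.mul_assoc]
  rfl

/-- if `A₁ᵀA₁ ⪰ A₂ᵀA₂` (Loewner order), then for all `B₁, B₂`,
`‖P⊥_{A₁B₁} A₁ B₂‖_F² ≥ ‖P⊥_{A₂B₁} A₂ B₂‖_F²`. -/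
theorem stmt1 {n₁ n₂ d p q : ℕ}
    (A₁ : Matrix (Fin n₁) (Fin d) ℝ) (A₂ : Matrix (Fin n₂) (Fin d) ℝ)
    (hA : (A₁ᵀ * A₁ - A₂ᵀ * A₂).PosSemidef)
    (B₁ : Matrix (Fin d) (Fin p) ℝ) (B₂ : Matrix (Fin d) (Fin q) ℝ) :
    froSq ((1 - projMat (A₂ * B₁)) * (A₂ * B₂)) ≤
      froSq ((1 - projMat (A₁ * B₁)) * (A₁ * B₂)) := by
  rw [froSq_mul_mul_eq_sum_norm_sq, froSq_mul_mul_eq_sum_norm_sq]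
  gcongr with j
  exact norm_one_sub_projMat_mul_le hA B₁ _
end

section
/- Let Σ₁ and Σ₂ be d×d real positive semidefinite matrices and r > 0 a scalar such that Σ₁ ⪰ r Σ₂ in the Loewner order. Then for every matrix V ∈ ℝ^{d×q} and every vector v ∈ ℝ^d, ‖P⊥_{Σ₂^{1/2} V} Σ₂^{1/2} v‖₂² ≤ (1/r) · ‖P⊥_{Σ₁^{1/2} V} Σ₁^{1/2} v‖₂², where Σ^{1/2} denotes the positive semidefinite square root of Σ. -/
/-! The squared residual `‖P⊥_{Σ^{1/2} V} Σ^{1/2} v‖²` is the least value of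
`‖Σ^{1/2} (v - V x)‖² = (v - V x)ᵀ Σ (v - V x)` over `x`. Evaluate the `Σ₂`-problem at
the minimiser `x` of the `Σ₁`-problem and use
`r (v - V x)ᵀ Σ₂ (v - V x) ≤ (v - V x)ᵀ Σ₁ (v - V x)`. -/

open Matrix

/-- The positive semidefinite square root of a positive semidefinite matrix
(the definition `Matrix.PosSemidef.sqrt` of the older Mathlib, since removed). -/
noncomputable def Matrix.PosSemidef.sqrt {n : Type*} [Fintype n] [DecidableEq n]
    {A : Matrix n n ℝ} (hA : A.PosSemidef) : Matrix n n ℝ :=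
  hA.1.eigenvectorUnitary.1 * diagonal ((↑) ∘ (√·) ∘ hA.1.eigenvalues) *
  (star hA.1.eigenvectorUnitary : Matrix n n ℝ)

namespace Matrix.PosSemidef

variable {n : Type*} [Fintype n] [DecidableEq n] {A : Matrix n n ℝ}

lemma transpose_sqrt (hA : A.PosSemidef) : hA.sqrtᵀ = hA.sqrt := by
  rw [← conjTranspose_eq_transpose_of_trivial]
  simp [sqrt, Matrix.mul_assoc, star_eq_conjTranspose]

lemma sqrt_mul_sqrt (hA : A.PosSemidef) : hA.sqrt * hA.sqrt = A := by
  set U : Matrix n n ℝ := hA.1.eigenvectorUnitary.1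
  set D : Matrix n n ℝ := diagonal ((↑) ∘ (√·) ∘ hA.1.eigenvalues)
  have hU : star U * U = 1 := Unitary.coe_star_mul_self _
  have hD : D * D = diagonal hA.1.eigenvalues := by
    rw [diagonal_mul_diagonal]
    congr 1 with i
    simp [Real.mul_self_sqrt (hA.eigenvalues_nonneg i)]
  calc hA.sqrt * hA.sqrt = U * D * (star U * U) * D * star U := by
        simp only [sqrt, U, D, Matrix.mul_assoc]
    _ = U * diagonal hA.1.eigenvalues * star U := by rw [hU, Matrix.mul_one, Matrix.mul_assoc U, hD]
    _ = A := (hA.1.spectral_theorem).symm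

lemma sum_sq_sqrt_mulVec (hA : A.PosSemidef) (w : n → ℝ) :
    ∑ i, (hA.sqrt *ᵥ w) i ^ 2 = w ⬝ᵥ A *ᵥ w := by
  simp only [sq, ← dotProduct.eq_1]
  rw [dotProduct_mulVec, ← mulVec_transpose, hA.transpose_sqrt, mulVec_mulVec, hA.sqrt_mul_sqrt,
    dotProduct_comm]

end Matrix.PosSemidef

lemma dotProduct_mulVec_le_of_posSemidef_sub {n : Type*} [Fintype n] {A B : Matrix n n ℝ}
    (h : (A - B).PosSemidef) (w : n → ℝ) : w ⬝ᵥ B *ᵥ w ≤ w ⬝ᵥ A *ᵥ w := by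
  have := h.dotProduct_mulVec_nonneg w
  simp only [star_trivial, sub_mulVec, dotProduct_sub] at this
  linarith

lemma toEuclideanLin_projMat {a b : ℕ} (M : Matrix (Fin a) (Fin b) ℝ) :
    toEuclideanLin (projMat M) =
      (LinearMap.range (toEuclideanLin M)).starProjection.toLinearMap :=
  toEuclideanLin.apply_symm_apply _

lemma projMat_mulVec {a b : ℕ} (M : Matrix (Fin a) (Fin b) ℝ) (u : Fin a → ℝ) :
    projMat M *ᵥ u =
      ((LinearMap.range (toEuclideanLin M)).starProjection (WithLp.toLp 2 u)).ofLp :=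
  congrArg WithLp.ofLp (LinearMap.congr_fun (toEuclideanLin_projMat M) (WithLp.toLp 2 u))

lemma isLeast_sum_sq_one_sub_projMat_mulVec {a b : ℕ} (M : Matrix (Fin a) (Fin b) ℝ)
    (u : Fin a → ℝ) :
    IsLeast (Set.range fun x ↦ ∑ i, (u - M *ᵥ x) i ^ 2)
      (∑ i, ((1 - projMat M) *ᵥ u) i ^ 2) := by
  set K := LinearMap.range (toEuclideanLin M)
  set y := WithLp.toLp 2 u
  have hsum : ∀ z : EuclideanSpace ℝ (Fin a), ‖y - z‖ ^ 2 = ∑ i, (u - z.ofLp) i ^ 2 :=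
    fun z ↦ EuclideanSpace.real_norm_sq_eq _
  rw [sub_mulVec, one_mulVec, projMat_mulVec]
  constructor
  · obtain ⟨x, hx⟩ := K.starProjection_apply_mem y
    exact ⟨x.ofLp, by rw [← hx]; rfl⟩
  · rintro _ ⟨x, rfl⟩
    have hmin : ‖y - K.starProjection y‖ ≤ ‖y - toEuclideanLin M (WithLp.toLp 2 x)‖ := by
      rw [K.starProjection_minimal]
      exact ciInf_le ⟨0, Set.forall_mem_range.2 fun _ ↦ norm_nonneg _⟩
        (⟨_, LinearMap.mem_range_self _ (WithLp.toLp 2 x)⟩ : K)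
    have := pow_le_pow_left₀ (norm_nonneg _) hmin 2
    rwa [hsum, hsum] at this

/-- if `Σ₁ ⪰ r Σ₂` with `r > 0` (Σ₁, Σ₂ positive semidefinite), then for
every `V ∈ ℝ^{d×q}` and `v ∈ ℝ^d`,
`‖P⊥_{Σ₂^{1/2} V} Σ₂^{1/2} v‖₂² ≤ (1/r) ‖P⊥_{Σ₁^{1/2} V} Σ₁^{1/2} v‖₂²`,
where `Σ^{1/2}` is the positive semidefinite square root. -/
theorem stmt2 {d q : ℕ} (S₁ S₂ : Matrix (Fin d) (Fin d) ℝ)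
    (hS₁ : S₁.PosSemidef) (hS₂ : S₂.PosSemidef) (r : ℝ) (hr : 0 < r)
    (hdom : (S₁ - r • S₂).PosSemidef)
    (V : Matrix (Fin d) (Fin q) ℝ) (v : Fin d → ℝ) :
    ∑ i, (((1 - projMat (hS₂.sqrt * V)) *ᵥ (hS₂.sqrt *ᵥ v)) i) ^ 2 ≤
      (1 / r) * ∑ i, (((1 - projMat (hS₁.sqrt * V)) *ᵥ (hS₁.sqrt *ᵥ v)) i) ^ 2 := by
  obtain ⟨⟨x, hx⟩, -⟩ :=
    isLeast_sum_sq_one_sub_projMat_mulVec (hS₁.sqrt * V) (hS₁.sqrt *ᵥ v)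
  beta_reduce at hx
  set w := v - V *ᵥ x
  have hres {S : Matrix (Fin d) (Fin d) ℝ} (hS : S.PosSemidef) :
      hS.sqrt *ᵥ v - (hS.sqrt * V) *ᵥ x = hS.sqrt *ᵥ w := by
    rw [← mulVec_mulVec, ← mulVec_sub]
  have hdom_w : r * (w ⬝ᵥ S₂ *ᵥ w) ≤ w ⬝ᵥ S₁ *ᵥ w := by
    simpa [smul_mulVec, dotProduct_smul] using dotProduct_mulVec_le_of_posSemidef_sub hdom w
  calc ∑ i, (((1 - projMat (hS₂.sqrt * V)) *ᵥ (hS₂.sqrt *ᵥ v)) i) ^ 2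
      ≤ ∑ i, (hS₂.sqrt *ᵥ v - (hS₂.sqrt * V) *ᵥ x) i ^ 2 :=
        (isLeast_sum_sq_one_sub_projMat_mulVec _ _).2 ⟨x, rfl⟩
    _ = w ⬝ᵥ S₂ *ᵥ w := by rw [hres, hS₂.sum_sq_sqrt_mulVec]
    _ ≤ (1 / r) * (w ⬝ᵥ S₁ *ᵥ w) := by rwa [one_div, le_inv_mul_iff₀ hr]
    _ = _ := by rw [← hx, hres, hS₁.sum_sq_sqrt_mulVec]
end
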